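/- Transversality of the first-order source for superposed plane waves: let k, k', ζ, ζ' ∈ ℝ^4 with k² = k'² = 0, k·ζ = 0, k'·ζ' = 0 (Minkowski products). Define J^μ = [(kk')_θ (ζ·ζ') − (ζζ')_θ (k·k')](k^μ − k'^μ) − [(kζ')_θ (ζ·k') − (ζk')_θ (k·ζ')](k^μ + k'^μ) + 2[(kζ')_θ (k·k') − (kk')_θ (k·ζ')] ζ^μ − 2[(ζk')_θ (k·k') − (kk')_θ (ζ·k')] ζ'^μ, where (vw)_θ := v^α θ_{αβ} w^β for an antisymmetric matrix θ. Then J is orthogonal to k + k': (k_μ + k'_μ) J^μ = 0. -/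
import Mathlib


open scoped BigOperators

noncomputable section

/-- Diagonal entries of the Minkowski metric η = diag(1,-1,-1,-1). -/
def ηd (i : Fin 4) : ℝ := if i = 0 then 1 else -1

/-- Minkowski bilinear form on ℝ⁴. -/
def mink (v w : Fin 4 → ℝ) : ℝ := ∑ i, ηd i * v i * w i

/-- θ-pairing (vw)_θ := v^α θ_{αβ} w^β. -/
def θpair (θ : Fin 4 → Fin 4 → ℝ) (v w : Fin 4 → ℝ) : ℝ := ∑ a, ∑ b, v a * θ a b * w b

/-- The first-order source J^μ of the plane-wave superposition problem. -/
def Jsrc (θ : Fin 4 → Fin 4 → ℝ) (k k' ζ ζ' : Fin 4 → ℝ) (μ : Fin 4) : ℝ :=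
  (θpair θ k k' * mink ζ ζ' - θpair θ ζ ζ' * mink k k') * (k μ - k' μ)
    - (θpair θ k ζ' * mink ζ k' - θpair θ ζ k' * mink k ζ') * (k μ + k' μ)
    + 2 * (θpair θ k ζ' * mink k k' - θpair θ k k' * mink k ζ') * ζ μ
    - 2 * (θpair θ ζ k' * mink k k' - θpair θ k k' * mink ζ k') * ζ' μ

lemma mink_symm (v w : Fin 4 → ℝ) : mink v w = mink w v := by
  simp only [mink, Fin.sum_univ_four]; ring

lemma mink_expand (v w x y z : Fin 4 → ℝ) (a b c d : ℝ) :
    mink v (fun μ => a * (w μ - x μ) - b * (w μ + x μ) + c * y μ - d * z μ)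
      = a * (mink v w - mink v x) - b * (mink v w + mink v x)
        + c * mink v y - d * mink v z := by
  simp only [mink, Fin.sum_univ_four]; ring

lemma mink_add_left (v w u : Fin 4 → ℝ) :
    mink (fun μ => v μ + w μ) u = mink v u + mink w u := by
  simp only [mink, Fin.sum_univ_four]; ring

/- STATEMENT 7: the source J is transverse to k + k': (k_μ + k'_μ) J^μ = 0. -/
theorem stmt_7 (θ : Fin 4 → Fin 4 → ℝ) (hθ : ∀ a b, θ a b = -θ b a)
    (k k' ζ ζ' : Fin 4 → ℝ)
    (hk : mink k k = 0) (hk' : mink k' k' = 0)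
    (hkζ : mink k ζ = 0) (hk'ζ' : mink k' ζ' = 0) :
    mink (fun μ => k μ + k' μ) (Jsrc θ k k' ζ ζ') = 0 := by
  have hJ : Jsrc θ k k' ζ ζ' = fun μ =>
      (θpair θ k k' * mink ζ ζ' - θpair θ ζ ζ' * mink k k') * (k μ - k' μ)
        - (θpair θ k ζ' * mink ζ k' - θpair θ ζ k' * mink k ζ') * (k μ + k' μ)
        + (2 * (θpair θ k ζ' * mink k k' - θpair θ k k' * mink k ζ')) * ζ μ
        - (2 * (θpair θ ζ k' * mink k k' - θpair θ k k' * mink ζ k')) * ζ' μ := by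
    funext μ; simp only [Jsrc]
  rw [hJ, mink_expand, mink_add_left, mink_add_left, mink_add_left, mink_add_left]
  rw [hk, hk', hkζ, hk'ζ', mink_symm k' ζ, mink_symm k' k]
  ring
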